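/- arXiv:1604.02842 — 2 statements merged into one kernel-verified Lean document; each statement's English description precedes it below -/
import Mathlib

section
/- Let T > 0 and let u, v : [0,T] × ℝ → ℝ be twice continuously differentiable with u(t,x) > 0 and v(t,x) > 0 everywhere, satisfying ∂_t u = ∂_x(u ∂_x(u+v)) and ∂_t v = ∂_x(v ∂_x(u+v)) on (0,T) × ℝ. Assume there exists R > 0 such that u(t,x) = v(t,x) for all t ∈ [0,T] and |x| ≥ R, that u(t,·) and v(t,·) are integrable with ∫_ℝ u(t,x) dx = ∫_ℝ v(t,x) dx for each t, and that u(0,x) = v(0,x) for all x ∈ ℝ. Then u(t,x) = v(t,x) for all (t,x) ∈ [0,T] × ℝ; consequently u = v = (1/2) w, where w = u + v solves ∂_t w = (1/2) ∂_xx(w²). -/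
open Real Set MeasureTheory

/-- Partial derivative in the first (time) variable. -/
noncomputable def pt (f : ℝ → ℝ → ℝ) (t x : ℝ) : ℝ := deriv (fun s => f s x) t

/-- Partial derivative in the second (space) variable. -/
noncomputable def px (f : ℝ → ℝ → ℝ) (t x : ℝ) : ℝ := deriv (fun y => f t y) x

/-!
The difference `φ = u - v` solves the linear transport equation `∂ₜφ = ∂ₓ(φ b)` with velocity
`b = ∂ₓ(u + v)`, and vanishes for `|x| ≥ R` and at `t = 0`. Integrating by parts, the energy
`E(t) = ∫_{-R}^{R} φ² dx` satisfies `E' = ∫ 2φ ∂ₓ(φ b) = ∫ φ² ∂ₓb ≤ C E`, so `E ≡ 0` by Gronwall,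
i.e. `u = v`. Adding the two equations gives `∂ₜw = ∂ₓ(w ∂ₓw) = ½ ∂ₓₓ(w²)` for `w = u + v`.
-/

open Function Filter Topology
open scoped Interval

section PartialDerivatives

variable {f : ℝ → ℝ → ℝ} {s : Set ℝ} {t x : ℝ}

theorem HasFDerivWithinAt.hasDerivAt_uncurry_right {L : ℝ × ℝ →L[ℝ] ℝ}
    (h : HasFDerivWithinAt (uncurry f) L (s ×ˢ univ) (t, x)) (ht : t ∈ s) :
    HasDerivAt (f t) (L (0, 1)) x := by
  have hline : HasDerivWithinAt (fun y : ℝ => (t, y)) ((0 : ℝ), (1 : ℝ)) univ x :=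
    ((hasDerivAt_const x t).prodMk (hasDerivAt_id x)).hasDerivWithinAt
  have h' := h.comp_hasDerivWithinAt x hline fun y _ => ⟨ht, mem_univ y⟩
  rwa [hasDerivWithinAt_univ] at h'

theorem hasDerivAt_px (hf : DifferentiableOn ℝ (uncurry f) (s ×ˢ univ)) (ht : t ∈ s) :
    HasDerivAt (f t) (px f t x) x :=
  ((hf (t, x) ⟨ht, mem_univ x⟩).hasFDerivWithinAt.hasDerivAt_uncurry_right
    ht).differentiableAt.hasDerivAt

theorem px_eq_fderivWithin (hf : DifferentiableOn ℝ (uncurry f) (s ×ˢ univ)) (ht : t ∈ s) :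
    px f t x = fderivWithin ℝ (uncurry f) (s ×ˢ univ) (t, x) (0, 1) :=
  ((hf (t, x) ⟨ht, mem_univ x⟩).hasFDerivWithinAt.hasDerivAt_uncurry_right ht).deriv

theorem ContDiffOn.uncurry_px {m n : WithTop ℕ∞} (hf : ContDiffOn ℝ n (uncurry f) (s ×ˢ univ))
    (hs : UniqueDiffOn ℝ s) (hmn : m + 1 ≤ n) :
    ContDiffOn ℝ m (uncurry (px f)) (s ×ˢ univ) := by
  have hdiff := hf.differentiableOn (ENat.one_le_iff_ne_zero_withTop.1 (le_add_self.trans hmn))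
  refine ((hf.fderivWithin (hs.prod uniqueDiffOn_univ) hmn).clm_apply
    (contDiffOn_const (c := ((0 : ℝ), (1 : ℝ))))).congr ?_
  rintro ⟨t, x⟩ ⟨ht, -⟩
  exact px_eq_fderivWithin hdiff ht

theorem hasDerivAt_pt (hf : DifferentiableOn ℝ (uncurry f) (s ×ˢ univ)) (ht : s ∈ 𝓝 t) :
    HasDerivAt (fun τ => f τ x) (pt f t x) t := by
  have hfx : DifferentiableAt ℝ (uncurry f) (t, x) :=
    hf.differentiableAt (prod_mem_nhds ht univ_mem)
  exact (hfx.comp t (differentiableAt_id.prodMk (differentiableAt_const x))).hasDerivAt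

end PartialDerivatives

section ParametricIntegral

variable {E : Type*} [NormedAddCommGroup E] [NormedSpace ℝ E]

theorem continuousOn_intervalIntegral_of_continuousOn {X : Type*} [TopologicalSpace X]
    {s : Set X} {f : X → ℝ → E} (hf : ContinuousOn (uncurry f) (s ×ˢ univ)) (a b : ℝ) :
    ContinuousOn (fun t => ∫ x in a..b, f t x) s := by
  rw [continuousOn_iff_continuous_domRestrict]
  have hcont : Continuous fun p : s × ℝ => uncurry f (p.1, p.2) :=
    hf.comp_continuous (by fun_prop) fun p => ⟨p.1.2, mem_univ _⟩
  exact intervalIntegral.continuous_parametric_intervalIntegral_of_continuous' hcont a b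

theorem hasDerivAt_intervalIntegral_of_continuousOn {f f' : ℝ → ℝ → E} {U : Set ℝ}
    {a b t₀ : ℝ} (hU : IsOpen U) (ht₀ : t₀ ∈ U) (hf : ∀ t ∈ U, ContinuousOn (f t) [[a, b]])
    (hf' : ContinuousOn (uncurry f') (U ×ˢ [[a, b]]))
    (hderiv : ∀ t ∈ U, ∀ x ∈ [[a, b]], HasDerivAt (fun τ => f τ x) (f' t x) t) :
    HasDerivAt (fun t => ∫ x in a..b, f t x) (∫ x in a..b, f' t₀ x) t₀ := by
  obtain ⟨K, hK, hKU, hKc⟩ := local_compact_nhds (hU.mem_nhds ht₀)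
  obtain ⟨C, hC⟩ := (hKc.prod isCompact_uIcc).exists_bound_of_continuousOn
    (hf'.mono (prod_mono hKU subset_rfl))
  refine (intervalIntegral.hasDerivAt_integral_of_dominated_loc_of_deriv_le (bound := fun _ => C)
    hK ?_ ((hf t₀ ht₀).intervalIntegrable) ?_ ?_ intervalIntegrable_const ?_).2
  · filter_upwards [hU.mem_nhds ht₀] with t ht
    exact ((hf t ht).mono uIoc_subset_uIcc).aestronglyMeasurable measurableSet_uIoc
  · refine ContinuousOn.aestronglyMeasurable ?_ measurableSet_uIoc
    exact hf'.comp (continuousOn_const.prodMk continuousOn_id)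
      fun x hx => ⟨ht₀, uIoc_subset_uIcc hx⟩
  · exact ae_of_all _ fun x hx t ht => hC (t, x) ⟨ht, uIoc_subset_uIcc hx⟩
  · exact ae_of_all _ fun x hx t ht => hderiv t (hKU ht) x (uIoc_subset_uIcc hx)

end ParametricIntegral

theorem integral_two_mul_mul_deriv_mul_eq {g g' b b' : ℝ → ℝ} {a c : ℝ}
    (hg : ∀ x ∈ [[a, c]], HasDerivAt g (g' x) x) (hb : ∀ x ∈ [[a, c]], HasDerivAt b (b' x) x)
    (hg' : ContinuousOn g' [[a, c]]) (hb' : ContinuousOn b' [[a, c]]) (ha : g a = 0)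
    (hc : g c = 0) :
    ∫ x in a..c, 2 * g x * (g' x * b x + g x * b' x) = ∫ x in a..c, g x ^ 2 * b' x := by
  have hgc : ContinuousOn g [[a, c]] := fun x hx => (hg x hx).continuousAt.continuousWithinAt
  have hbc : ContinuousOn b [[a, c]] := fun x hx => (hb x hx).continuousAt.continuousWithinAt
  have hsq : ∀ x ∈ [[a, c]], HasDerivAt (fun y => g y ^ 2 * b y)
      (2 * g x * g' x * b x + g x ^ 2 * b' x) x := fun x hx =>
    (((hg x hx).fun_pow 2).mul (hb x hx)).congr_deriv (by simp)
  have hrem_int : IntervalIntegrable (fun x => g x ^ 2 * b' x) volume a c :=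
    ((hgc.pow 2).mul hb').intervalIntegrable
  have hsq_int : IntervalIntegrable (fun x => 2 * g x * g' x * b x + g x ^ 2 * b' x) volume a c :=
    ((((continuousOn_const.mul hgc).mul hg').mul hbc).add ((hgc.pow 2).mul hb')).intervalIntegrable
  calc ∫ x in a..c, 2 * g x * (g' x * b x + g x * b' x)
      = ∫ x in a..c, (2 * g x * g' x * b x + g x ^ 2 * b' x) + g x ^ 2 * b' x :=
        intervalIntegral.integral_congr fun x _ => by ring
    _ = (g c ^ 2 * b c - g a ^ 2 * b a) + ∫ x in a..c, g x ^ 2 * b' x := by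
        rw [intervalIntegral.integral_add hsq_int hrem_int,
          intervalIntegral.integral_eq_sub_of_hasDerivAt hsq hsq_int]
    _ = ∫ x in a..c, g x ^ 2 * b' x := by simp [ha, hc]

theorem eqOn_zero_of_hasDerivAt_le_mul {F F' : ℝ → ℝ} {a c C : ℝ}
    (hF : ContinuousOn F (Icc a c)) (hF' : ∀ t ∈ Ioo a c, HasDerivAt F (F' t) t)
    (hle : ∀ t ∈ Ioo a c, F' t ≤ C * F t) (hnonneg : ∀ t ∈ Icc a c, 0 ≤ F t) (ha : F a = 0) :
    EqOn F 0 (Icc a c) := by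
  have hanti : AntitoneOn (fun t => exp (-C * t) * F t) (Icc a c) := by
    refine antitoneOn_of_hasDerivWithinAt_nonpos (convex_Icc a c)
      ((continuous_exp.comp (continuous_const.mul continuous_id)).continuousOn.mul hF)
      (f' := fun t => exp (-C * t) * (F' t - C * F t)) (fun t ht => ?_) fun t ht => ?_
    · rw [interior_Icc] at ht
      have h := (((hasDerivAt_id t).const_mul (-C)).exp).mul (hF' t ht)
      exact (h.congr_deriv (by simp only [id, mul_one]; ring)).hasDerivWithinAt
    · rw [interior_Icc] at ht
      exact mul_nonpos_of_nonneg_of_nonpos (exp_pos _).le (sub_nonpos.2 (hle t ht))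
  intro t ht
  have hle0 : exp (-C * t) * F t ≤ 0 := by
    simpa [ha] using hanti (left_mem_Icc.2 (ht.1.trans ht.2)) ht ht.1
  exact le_antisymm (nonpos_of_mul_nonpos_right hle0 (exp_pos _)) (hnonneg t ht)

theorem eqOn_zero_of_integral_sq_eq_zero {g : ℝ → ℝ} {a c : ℝ} (hg : ContinuousOn g (Icc a c))
    (hac : a ≤ c) (h : ∫ x in a..c, g x ^ 2 = 0) : EqOn g 0 (Ioc a c) := by
  have hae := (intervalIntegral.integral_eq_zero_iff_of_le_of_nonneg_ae hac
    (ae_of_all _ fun x => sq_nonneg (g x)) ((hg.pow 2).intervalIntegrable_of_Icc hac)).1 h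
  intro x hx
  simpa using Measure.eqOn_Ioc_of_ae_eq (μ := volume) hae ((hg.pow 2).mono Ioc_subset_Icc_self)
    continuousOn_const hx

section Transport

variable {U : Set ℝ} {φ b : ℝ → ℝ → ℝ}

theorem hasDerivAt_integral_sq_of_transport {a c t : ℝ} (hU : IsOpen U)
    (hφ : ContDiffOn ℝ 1 (uncurry φ) (U ×ˢ univ)) (hb : ContDiffOn ℝ 1 (uncurry b) (U ×ˢ univ))
    (heq : ∀ t ∈ U, ∀ x, pt φ t x = px (fun s y => φ s y * b s y) t x)
    (hbdry : ∀ t ∈ U, φ t a = 0 ∧ φ t c = 0) (ht : t ∈ U) :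
    HasDerivAt (fun τ => ∫ x in a..c, φ τ x ^ 2) (∫ x in a..c, φ t x ^ 2 * px b t x) t := by
  have hφd : DifferentiableOn ℝ (uncurry φ) (U ×ˢ univ) := hφ.differentiableOn one_ne_zero
  have hbd : DifferentiableOn ℝ (uncurry b) (U ×ˢ univ) := hb.differentiableOn one_ne_zero
  have hφc : ContinuousOn (fun p : ℝ × ℝ => φ p.1 p.2) (U ×ˢ univ) := hφ.continuousOn
  have hbc : ContinuousOn (fun p : ℝ × ℝ => b p.1 p.2) (U ×ˢ univ) := hb.continuousOn
  have hpxφ : ContinuousOn (fun p : ℝ × ℝ => px φ p.1 p.2) (U ×ˢ univ) :=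
    (hφ.uncurry_px (m := 0) hU.uniqueDiffOn (by norm_num)).continuousOn
  have hpxb : ContinuousOn (fun p : ℝ × ℝ => px b p.1 p.2) (U ×ˢ univ) :=
    (hb.uncurry_px (m := 0) hU.uniqueDiffOn (by norm_num)).continuousOn
  have hpt : ∀ t ∈ U, ∀ x, pt φ t x = px φ t x * b t x + φ t x * px b t x := fun t ht x =>
    (heq t ht x).trans ((hasDerivAt_px hφd ht).mul (hasDerivAt_px hbd ht)).deriv
  have hleibniz := hasDerivAt_intervalIntegral_of_continuousOn (a := a) (b := c) hU ht
    (f' := fun t x => 2 * φ t x * (px φ t x * b t x + φ t x * px b t x))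
    (fun t ht => ((hφc.uncurry_left t ht).pow 2).mono (subset_univ _))
    (((continuousOn_const.fun_mul hφc).fun_mul
      ((hpxφ.fun_mul hbc).fun_add (hφc.fun_mul hpxb))).mono
      (prod_mono subset_rfl (subset_univ _)))
    fun t ht x _ => ((hasDerivAt_pt hφd (hU.mem_nhds ht)).fun_pow 2).congr_deriv
      (by rw [hpt t ht x]; simp)
  rwa [integral_two_mul_mul_deriv_mul_eq (fun x _ => hasDerivAt_px hφd ht)
    (fun x _ => hasDerivAt_px hbd ht) ((hpxφ.uncurry_left t ht).mono (subset_univ _))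
    ((hpxb.uncurry_left t ht).mono (subset_univ _)) (hbdry t ht).1 (hbdry t ht).2] at hleibniz

theorem eq_zero_of_transport {T L : ℝ} (hT : 0 < T)
    (hφ : ContDiffOn ℝ 1 (uncurry φ) (Icc 0 T ×ˢ univ))
    (hb : ContDiffOn ℝ 1 (uncurry b) (Icc 0 T ×ˢ univ))
    (heq : ∀ t ∈ Ioo 0 T, ∀ x, pt φ t x = px (fun s y => φ s y * b s y) t x)
    (hdecay : ∀ t ∈ Icc 0 T, ∀ x, L ≤ |x| → φ t x = 0) (hinit : ∀ x, φ 0 x = 0) :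
    ∀ t ∈ Icc 0 T, ∀ x, φ t x = 0 := by
  intro t ht x
  rcases le_or_gt L |x| with hx | hx
  · exact hdecay t ht x hx
  have hL : -L ≤ L := by linarith [abs_nonneg x]
  have hφc : ContinuousOn (fun p : ℝ × ℝ => φ p.1 p.2) (Icc 0 T ×ˢ univ) := hφ.continuousOn
  have hpxb : ContinuousOn (uncurry (px b)) (Icc 0 T ×ˢ univ) :=
    (hb.uncurry_px (m := 0) (uniqueDiffOn_Icc hT) (by norm_num)).continuousOn
  obtain ⟨C, hC⟩ :=
    (isCompact_Icc.prod (isCompact_Icc (a := -L) (b := L))).exists_bound_of_continuousOn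
      (hpxb.mono (prod_mono subset_rfl (subset_univ _)))
  set F := fun τ => ∫ y in -L..L, φ τ y ^ 2
  have hderiv : ∀ τ ∈ Ioo 0 T, HasDerivAt F (∫ y in -L..L, φ τ y ^ 2 * px b τ y) τ :=
    fun τ hτ => hasDerivAt_integral_sq_of_transport isOpen_Ioo
      (hφ.mono (prod_mono Ioo_subset_Icc_self subset_rfl))
      (hb.mono (prod_mono Ioo_subset_Icc_self subset_rfl)) heq
      (fun s hs => ⟨hdecay s (Ioo_subset_Icc_self hs) _ (by simp [le_abs_self]),
        hdecay s (Ioo_subset_Icc_self hs) _ (le_abs_self L)⟩) hτ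
  have hbound : ∀ τ ∈ Ioo 0 T, ∫ y in -L..L, φ τ y ^ 2 * px b τ y ≤ C * F τ := by
    intro τ hτ
    have hφτ := continuousOn_univ.1 (hφc.uncurry_left τ (Ioo_subset_Icc_self hτ))
    rw [← intervalIntegral.integral_const_mul]
    refine intervalIntegral.integral_mono_on hL
      (((hφτ.pow 2).mul (continuousOn_univ.1 (hpxb.uncurry_left τ
        (Ioo_subset_Icc_self hτ)))).intervalIntegrable _ _)
      ((continuous_const.mul (hφτ.pow 2)).intervalIntegrable _ _) fun y hy => ?_
    have hCy : |px b τ y| ≤ C := by simpa using hC (τ, y) ⟨Ioo_subset_Icc_self hτ, hy⟩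
    nlinarith [le_abs_self (px b τ y), sq_nonneg (φ τ y)]
  have hF : F t = 0 := eqOn_zero_of_hasDerivAt_le_mul
    (continuousOn_intervalIntegral_of_continuousOn (hφc.pow 2) _ _) hderiv hbound
    (fun τ _ => intervalIntegral.integral_nonneg hL fun y _ => sq_nonneg _) (by simp [hinit]) ht
  exact eqOn_zero_of_integral_sq_eq_zero (continuousOn_univ.1 (hφc.uncurry_left t ht)).continuousOn
    hL hF ⟨by linarith [neg_abs_le x], by linarith [le_abs_self x]⟩

end Transport

section LinearTransport

variable {U : Set ℝ} {u v b : ℝ → ℝ → ℝ}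

theorem transport_add (hU : IsOpen U) (hu : DifferentiableOn ℝ (uncurry u) (U ×ˢ univ))
    (hv : DifferentiableOn ℝ (uncurry v) (U ×ˢ univ))
    (hb : DifferentiableOn ℝ (uncurry b) (U ×ˢ univ))
    (hu_eq : ∀ t ∈ U, ∀ x, pt u t x = px (fun s y => u s y * b s y) t x)
    (hv_eq : ∀ t ∈ U, ∀ x, pt v t x = px (fun s y => v s y * b s y) t x) :
    ∀ t ∈ U, ∀ x, pt (fun s y => u s y + v s y) t x
      = px (fun s y => (u s y + v s y) * b s y) t x := by
  intro t ht x
  have hut := hasDerivAt_px (x := x) hu ht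
  have hvt := hasDerivAt_px (x := x) hv ht
  have hbt := hasDerivAt_px (x := x) hb ht
  have hpt : pt (fun s y => u s y + v s y) t x = pt u t x + pt v t x :=
    ((hasDerivAt_pt hu (hU.mem_nhds ht)).fun_add (hasDerivAt_pt hv (hU.mem_nhds ht))).deriv
  have hpx : px (fun s y => (u s y + v s y) * b s y) t x
      = (px u t x + px v t x) * b t x + (u t x + v t x) * px b t x :=
    ((hut.fun_add hvt).fun_mul hbt).deriv
  have hpxu : px (fun s y => u s y * b s y) t x = px u t x * b t x + u t x * px b t x :=
    (hut.fun_mul hbt).deriv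
  have hpxv : px (fun s y => v s y * b s y) t x = px v t x * b t x + v t x * px b t x :=
    (hvt.fun_mul hbt).deriv
  rw [hpt, hpx, hu_eq t ht x, hv_eq t ht x, hpxu, hpxv]
  ring

theorem transport_sub (hU : IsOpen U) (hu : DifferentiableOn ℝ (uncurry u) (U ×ˢ univ))
    (hv : DifferentiableOn ℝ (uncurry v) (U ×ˢ univ))
    (hb : DifferentiableOn ℝ (uncurry b) (U ×ˢ univ))
    (hu_eq : ∀ t ∈ U, ∀ x, pt u t x = px (fun s y => u s y * b s y) t x)
    (hv_eq : ∀ t ∈ U, ∀ x, pt v t x = px (fun s y => v s y * b s y) t x) :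
    ∀ t ∈ U, ∀ x, pt (fun s y => u s y - v s y) t x
      = px (fun s y => (u s y - v s y) * b s y) t x := by
  intro t ht x
  have hut := hasDerivAt_px (x := x) hu ht
  have hvt := hasDerivAt_px (x := x) hv ht
  have hbt := hasDerivAt_px (x := x) hb ht
  have hpt : pt (fun s y => u s y - v s y) t x = pt u t x - pt v t x :=
    ((hasDerivAt_pt hu (hU.mem_nhds ht)).fun_sub (hasDerivAt_pt hv (hU.mem_nhds ht))).deriv
  have hpx : px (fun s y => (u s y - v s y) * b s y) t x
      = (px u t x - px v t x) * b t x + (u t x - v t x) * px b t x :=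
    ((hut.fun_sub hvt).fun_mul hbt).deriv
  have hpxu : px (fun s y => u s y * b s y) t x = px u t x * b t x + u t x * px b t x :=
    (hut.fun_mul hbt).deriv
  have hpxv : px (fun s y => v s y * b s y) t x = px v t x * b t x + v t x * px b t x :=
    (hvt.fun_mul hbt).deriv
  rw [hpt, hpx, hu_eq t ht x, hv_eq t ht x, hpxu, hpxv]
  ring

end LinearTransport

theorem px_px_sq {w : ℝ → ℝ → ℝ} {s : Set ℝ} {t x : ℝ}
    (hw : DifferentiableOn ℝ (uncurry w) (s ×ˢ univ)) (ht : t ∈ s) :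
    px (px fun s y => w s y ^ 2) t x = 2 * px (fun s y => w s y * px w s y) t x := by
  have hsq : px (fun s y => w s y ^ 2) t = fun y => 2 * (w t y * px w t y) :=
    funext fun y => ((hasDerivAt_px hw ht).fun_pow 2).deriv.trans (by simp; ring)
  show deriv (px (fun s y => w s y ^ 2) t) x = _
  rw [hsq, deriv_const_mul_field']
  rfl

theorem stmt_13_general (T : ℝ) (hT : 0 < T) (u v : ℝ → ℝ → ℝ)
    (husmooth : ContDiffOn ℝ 2 (Function.uncurry u) (Icc 0 T ×ˢ univ))
    (hvsmooth : ContDiffOn ℝ 2 (Function.uncurry v) (Icc 0 T ×ˢ univ))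
    (hu : ∀ t ∈ Ioo (0:ℝ) T, ∀ x : ℝ,
      pt u t x = px (fun s y => u s y * px (fun a b => u a b + v a b) s y) t x)
    (hv : ∀ t ∈ Ioo (0:ℝ) T, ∀ x : ℝ,
      pt v t x = px (fun s y => v s y * px (fun a b => u a b + v a b) s y) t x)
    (R : ℝ)
    (hdecay : ∀ t ∈ Icc (0:ℝ) T, ∀ x : ℝ, R ≤ |x| → u t x = v t x)
    (hinit : ∀ x : ℝ, u 0 x = v 0 x) :
    (∀ t ∈ Icc (0:ℝ) T, ∀ x : ℝ,
      u t x = v t x ∧ u t x = (1/2) * (u t x + v t x)) ∧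
    (∀ t ∈ Ioo (0:ℝ) T, ∀ x : ℝ,
      pt (fun s y => u s y + v s y) t x
        = (1/2) * px (px (fun s y => (u s y + v s y) ^ 2)) t x) := by
  have hinterior : Ioo 0 T ×ˢ univ ⊆ Icc 0 T ×ˢ (univ : Set ℝ) :=
    prod_mono Ioo_subset_Icc_self subset_rfl
  have hw : ContDiffOn ℝ 2 (uncurry fun s y => u s y + v s y) (Icc 0 T ×ˢ univ) :=
    husmooth.add hvsmooth
  have hb := hw.uncurry_px (m := 1) (uniqueDiffOn_Icc hT) (by norm_num)
  have hud := (husmooth.differentiableOn two_ne_zero).mono hinterior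
  have hvd := (hvsmooth.differentiableOn two_ne_zero).mono hinterior
  have hbd := (hb.differentiableOn one_ne_zero).mono hinterior
  have hdiff : ∀ t ∈ Icc 0 T, ∀ x, u t x - v t x = 0 :=
    eq_zero_of_transport hT ((husmooth.sub hvsmooth).of_le one_le_two) hb
      (transport_sub isOpen_Ioo hud hvd hbd hu hv)
      (fun t ht x hx => sub_eq_zero.2 (hdecay t ht x hx)) fun x => sub_eq_zero.2 (hinit x)
  refine ⟨fun t ht x => ?_, fun t ht x => ?_⟩
  · have huv := sub_eq_zero.1 (hdiff t ht x)
    exact ⟨huv, by rw [huv]; ring⟩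
  · rw [transport_add isOpen_Ioo hud hvd hbd hu hv t ht x,
      px_px_sq (hw.differentiableOn two_ne_zero) (Ioo_subset_Icc_self ht)]
    ring

/-- Uniqueness for equal initial data: for positive solutions of
`∂ₜu = ∂ₓ(u ∂ₓ(u+v))`, `∂ₜv = ∂ₓ(v ∂ₓ(u+v))` on `(0,T) × ℝ` agreeing outside a
compact set, with equal masses and `u(0,·) = v(0,·)`, one has `u = v = (1/2)w`
where `w = u + v` solves the Boussinesq equation `∂ₜw = (1/2)∂ₓₓ(w²)`. -/
theorem stmt_13 (T : ℝ) (hT : 0 < T) (u v : ℝ → ℝ → ℝ)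
    (husmooth : ContDiffOn ℝ 2 (Function.uncurry u) (Icc 0 T ×ˢ univ))
    (hvsmooth : ContDiffOn ℝ 2 (Function.uncurry v) (Icc 0 T ×ˢ univ))
    (hupos : ∀ t x : ℝ, 0 < u t x) (hvpos : ∀ t x : ℝ, 0 < v t x)
    (hu : ∀ t ∈ Ioo (0:ℝ) T, ∀ x : ℝ,
      pt u t x = px (fun s y => u s y * px (fun a b => u a b + v a b) s y) t x)
    (hv : ∀ t ∈ Ioo (0:ℝ) T, ∀ x : ℝ,
      pt v t x = px (fun s y => v s y * px (fun a b => u a b + v a b) s y) t x)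
    (R : ℝ) (hR : 0 < R)
    (hdecay : ∀ t ∈ Icc (0:ℝ) T, ∀ x : ℝ, R ≤ |x| → u t x = v t x)
    (huint : ∀ t ∈ Icc (0:ℝ) T, Integrable (u t))
    (hvint : ∀ t ∈ Icc (0:ℝ) T, Integrable (v t))
    (hmass : ∀ t ∈ Icc (0:ℝ) T, ∫ x, u t x = ∫ x, v t x)
    (hinit : ∀ x : ℝ, u 0 x = v 0 x) :
    (∀ t ∈ Icc (0:ℝ) T, ∀ x : ℝ,
      u t x = v t x ∧ u t x = (1/2) * (u t x + v t x)) ∧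
    (∀ t ∈ Ioo (0:ℝ) T, ∀ x : ℝ,
      pt (fun s y => u s y + v s y) t x
        = (1/2) * px (px (fun s y => (u s y + v s y) ^ 2)) t x) :=
  stmt_13_general T hT u v husmooth hvsmooth hu hv R hdecay hinit
end

section
/- Let f : ℝ → ℝ be twice continuously differentiable, let T > 0, and let u, v : [0,T] × ℝ → ℝ be twice continuously differentiable with u(t,x) > 0 and v(t,x) > 0 everywhere, satisfying ∂_t u = ∂_x( u ∂_x( f(u+v) ) ) and ∂_t v = ∂_x( v ∂_x( f(u+v) ) ) on (0,T) × ℝ. Assume there exists R > 0 such that u(t,x) = v(t,x) for all t ∈ [0,T] and all |x| ≥ R, and that u(t,·) log(u(t,·)/v(t,·)) is integrable for each t. Then t ↦ H(u(t)||v(t)) = ∫_ℝ u(t,x) log( u(t,x)/v(t,x) ) dx is constant on [0,T]. -/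
open Real Set MeasureTheory

open Function

/-! Both species are transported by the same velocity `N = ∂ₓ f(u + v)`, so the entropy density
`u log (u / v)` obeys the local conservation law `∂ₜ (u log (u / v)) = ∂ₓ (u N log (u / v))`.
The flux vanishes wherever `u = v`, in particular at `x = ± R`; integrating over `[-R, R]` and
differentiating under the integral sign shows that `H` has zero derivative on `(0, T)`, and
continuity of `H` on `[0, T]` together with the mean value theorem makes it constant. -/

section PartialDerivatives

variable {u : ℝ → ℝ → ℝ} {t x : ℝ}

theorem hasDerivAt_pt_s15 (hu : DifferentiableAt ℝ (uncurry u) (t, x)) :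
    HasDerivAt (fun s => u s x) (pt u t x) t :=
  have h : DifferentiableAt ℝ (fun s => u s x) t :=
    hu.comp (f := fun s => (s, x)) t (differentiableAt_id.prodMk (differentiableAt_const x))
  h.hasDerivAt

theorem hasDerivAt_px_s15 (hu : DifferentiableAt ℝ (uncurry u) (t, x)) :
    HasDerivAt (fun y => u t y) (px u t x) x :=
  have h : DifferentiableAt ℝ (fun y => u t y) x :=
    hu.comp (f := fun y => (t, y)) x ((differentiableAt_const t).prodMk differentiableAt_id)
  h.hasDerivAt

theorem pt_eq_fderiv (hu : DifferentiableAt ℝ (uncurry u) (t, x)) :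
    pt u t x = fderiv ℝ (uncurry u) (t, x) (1, 0) :=
  have h : HasDerivAt (fun s => u s x) (fderiv ℝ (uncurry u) (t, x) (1, 0)) t :=
    hu.hasFDerivAt.comp_hasDerivAt (f := fun s => (s, x)) t
      ((hasDerivAt_id t).prodMk (hasDerivAt_const t x))
  h.deriv

theorem px_eq_fderiv (hu : DifferentiableAt ℝ (uncurry u) (t, x)) :
    px u t x = fderiv ℝ (uncurry u) (t, x) (0, 1) :=
  have h : HasDerivAt (fun y => u t y) (fderiv ℝ (uncurry u) (t, x) (0, 1)) x :=
    hu.hasFDerivAt.comp_hasDerivAt (f := fun y => (t, y)) x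
      ((hasDerivAt_const x t).prodMk (hasDerivAt_id x))
  h.deriv

variable {Ω : Set (ℝ × ℝ)} {m n : WithTop ℕ∞}

theorem contDiffOn_uncurry_pt (hu : ContDiffOn ℝ n (uncurry u) Ω) (hΩ : IsOpen Ω)
    (hmn : m + 1 ≤ n) : ContDiffOn ℝ m (uncurry (pt u)) Ω :=
  ((hu.fderiv_of_isOpen hΩ hmn).clm_apply contDiffOn_const).congr fun _ hp =>
    pt_eq_fderiv ((hu.contDiffAt (hΩ.mem_nhds hp)).differentiableAt fun h => by simp [h] at hmn)

theorem contDiffOn_uncurry_px (hu : ContDiffOn ℝ n (uncurry u) Ω) (hΩ : IsOpen Ω)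
    (hmn : m + 1 ≤ n) : ContDiffOn ℝ m (uncurry (px u)) Ω :=
  ((hu.fderiv_of_isOpen hΩ hmn).clm_apply contDiffOn_const).congr fun _ hp =>
    px_eq_fderiv ((hu.contDiffAt (hΩ.mem_nhds hp)).differentiableAt fun h => by simp [h] at hmn)

end PartialDerivatives

theorem HasDerivAt.log_div {g h : ℝ → ℝ} {g' h' x : ℝ} (hg : HasDerivAt g g' x)
    (hh : HasDerivAt h h' x) (hgx : g x ≠ 0) (hhx : h x ≠ 0) :
    HasDerivAt (fun y => Real.log (g y / h y)) (g' / g x - h' / h x) x :=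
  ((hg.div hh hhx).log (div_ne_zero hgx hhx)).congr_deriv (by rw [Pi.div_apply]; field_simp)

section RelativeEntropy

variable {u v N : ℝ → ℝ → ℝ} {t x : ℝ}

noncomputable def relEntropyRate (u v : ℝ → ℝ → ℝ) (t x : ℝ) : ℝ :=
  pt u t x * log (u t x / v t x) + u t x * (pt u t x / u t x - pt v t x / v t x)

theorem hasDerivAt_relEntropyDensity (hu : DifferentiableAt ℝ (uncurry u) (t, x))
    (hv : DifferentiableAt ℝ (uncurry v) (t, x)) (hu0 : u t x ≠ 0) (hv0 : v t x ≠ 0) :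
    HasDerivAt (fun s => u s x * log (u s x / v s x)) (relEntropyRate u v t x) t :=
  (hasDerivAt_pt_s15 hu).mul ((hasDerivAt_pt_s15 hu).log_div (hasDerivAt_pt_s15 hv) hu0 hv0)

theorem hasDerivAt_relEntropyFlux (hu : DifferentiableAt ℝ (uncurry u) (t, x))
    (hv : DifferentiableAt ℝ (uncurry v) (t, x)) (hN : DifferentiableAt ℝ (N t) x)
    (hu0 : u t x ≠ 0) (hv0 : v t x ≠ 0)
    (hut : pt u t x = px (fun s y => u s y * N s y) t x)
    (hvt : pt v t x = px (fun s y => v s y * N s y) t x) :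
    HasDerivAt (fun y => u t y * N t y * log (u t y / v t y)) (relEntropyRate u v t x) x := by
  have huN : pt u t x = px u t x * N t x + u t x * deriv (N t) x :=
    hut.trans ((hasDerivAt_px_s15 hu).mul hN.hasDerivAt).deriv
  have hvN : pt v t x = px v t x * N t x + v t x * deriv (N t) x :=
    hvt.trans ((hasDerivAt_px_s15 hv).mul hN.hasDerivAt).deriv
  refine (((hasDerivAt_px_s15 hu).mul hN.hasDerivAt).mul
    ((hasDerivAt_px_s15 hu).log_div (hasDerivAt_px_s15 hv) hu0 hv0)).congr_deriv ?_
  rw [relEntropyRate, huN, hvN, Pi.mul_apply]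
  -- the `∂ₓ N` terms cancel: `u ((u N)ₓ / u - (v N)ₓ / v) = u N (uₓ / u - vₓ / v)`
  field_simp
  ring

variable {Ω : Set (ℝ × ℝ)}

theorem hasDerivAt_relEntropyFlux_of_contDiffOn {f : ℝ → ℝ} (hf : ContDiff ℝ 2 f)
    (hΩ : IsOpen Ω) (hu : ContDiffOn ℝ 2 (uncurry u) Ω) (hv : ContDiffOn ℝ 2 (uncurry v) Ω)
    (htx : (t, x) ∈ Ω) (hu0 : u t x ≠ 0) (hv0 : v t x ≠ 0)
    (hut : pt u t x = px (fun s y => u s y * px (fun a b => f (u a b + v a b)) s y) t x)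
    (hvt : pt v t x = px (fun s y => v s y * px (fun a b => f (u a b + v a b)) s y) t x) :
    HasDerivAt (fun y => u t y * px (fun a b => f (u a b + v a b)) t y * log (u t y / v t y))
      (relEntropyRate u v t x) x := by
  have hN := contDiffOn_uncurry_px (u := fun a b => f (u a b + v a b)) (m := 1)
    (hf.comp_contDiffOn (hu.add hv)) hΩ (by norm_num)
  have hdiff : ∀ {w : ℝ → ℝ → ℝ} {n : WithTop ℕ∞}, ContDiffOn ℝ n (uncurry w) Ω → n ≠ 0 →
      DifferentiableAt ℝ (uncurry w) (t, x) := fun hw hn =>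
    (hw.contDiffAt (hΩ.mem_nhds htx)).differentiableAt hn
  exact hasDerivAt_relEntropyFlux (hdiff hu two_ne_zero) (hdiff hv two_ne_zero)
    (hasDerivAt_px_s15 (hdiff hN one_ne_zero)).differentiableAt hu0 hv0 hut hvt

theorem continuousOn_uncurry_mul_log_div (hu : ContinuousOn (uncurry u) Ω)
    (hv : ContinuousOn (uncurry v) Ω) (hu0 : ∀ t x, u t x ≠ 0) (hv0 : ∀ t x, v t x ≠ 0) :
    ContinuousOn (uncurry fun t x => u t x * log (u t x / v t x)) Ω :=
  hu.mul ((hu.div hv fun p _ => hv0 p.1 p.2).log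
    fun p _ => div_ne_zero (hu0 p.1 p.2) (hv0 p.1 p.2))

theorem continuousOn_uncurry_relEntropyRate (hu : ContDiffOn ℝ 1 (uncurry u) Ω)
    (hv : ContDiffOn ℝ 1 (uncurry v) Ω) (hΩ : IsOpen Ω) (hu0 : ∀ t x, u t x ≠ 0)
    (hv0 : ∀ t x, v t x ≠ 0) : ContinuousOn (uncurry (relEntropyRate u v)) Ω := by
  have hut := (contDiffOn_uncurry_pt (m := 0) hu hΩ (by norm_num)).continuousOn
  have hvt := (contDiffOn_uncurry_pt (m := 0) hv hΩ (by norm_num)).continuousOn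
  have hlog : ContinuousOn (fun p => log (uncurry u p / uncurry v p)) Ω :=
    (hu.continuousOn.div hv.continuousOn fun p _ => hv0 p.1 p.2).log
      fun p _ => div_ne_zero (hu0 p.1 p.2) (hv0 p.1 p.2)
  exact (hut.mul hlog).add (hu.continuousOn.mul
    ((hut.div hu.continuousOn fun p _ => hu0 p.1 p.2).sub
      (hvt.div hv.continuousOn fun p _ => hv0 p.1 p.2)))

end RelativeEntropy

section Conservation

variable {F F' : ℝ → ℝ → ℝ} {a b : ℝ}

theorem continuousOn_intervalIntegral_of_continuousOn_uncurry {s : Set ℝ}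
    (hF : ContinuousOn (uncurry F) (s ×ˢ univ)) :
    ContinuousOn (fun t => ∫ x in a..b, F t x) s := by
  rw [continuousOn_iff_continuous_domRestrict]
  exact intervalIntegral.continuous_parametric_intervalIntegral_of_continuous'
    (f := fun (t : s) x => F t x)
    (hF.comp_continuous (continuous_subtype_val.prodMap continuous_id)
      fun p => ⟨p.1.2, mem_univ _⟩) a b

theorem hasDerivAt_intervalIntegral_of_continuousOn_s15 {J : Set ℝ} {t₀ : ℝ} (hJ : IsOpen J)
    (ht₀ : t₀ ∈ J) (hF : ContinuousOn (uncurry F) (J ×ˢ univ))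
    (hF' : ContinuousOn (uncurry F') (J ×ˢ univ))
    (hderiv : ∀ t ∈ J, ∀ x, HasDerivAt (fun s => F s x) (F' t x) t) :
    HasDerivAt (fun t => ∫ x in a..b, F t x) (∫ x in a..b, F' t₀ x) t₀ := by
  have hslice : ∀ {G : ℝ → ℝ → ℝ}, ContinuousOn (uncurry G) (J ×ˢ univ) →
      ∀ t ∈ J, Continuous (G t) := fun hG t ht =>
    hG.comp_continuous (continuous_const.prodMk continuous_id) fun x => ⟨ht, mem_univ x⟩
  obtain ⟨ε, hε, hεJ⟩ := Metric.nhds_basis_closedBall.mem_iff.1 (hJ.mem_nhds ht₀)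
  obtain ⟨C, hC⟩ := (isCompact_closedBall t₀ ε |>.prod isCompact_uIcc).exists_bound_of_continuousOn
    (hF'.mono (prod_mono hεJ (subset_univ _)))
  refine (intervalIntegral.hasDerivAt_integral_of_dominated_loc_of_deriv_le (bound := fun _ => C)
    (Metric.closedBall_mem_nhds t₀ hε) ?_ ((hslice hF t₀ ht₀).intervalIntegrable a b)
    (hslice hF' t₀ ht₀).aestronglyMeasurable ?_ intervalIntegrable_const ?_).2
  · filter_upwards [hJ.mem_nhds ht₀] with t ht using (hslice hF t ht).aestronglyMeasurable
  · filter_upwards with x hx t ht using hC (t, x) ⟨ht, uIoc_subset_uIcc hx⟩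
  · filter_upwards with x hx t ht using hderiv t (hεJ ht) x

theorem intervalIntegral_eq_of_conservationLaw {ρ G D : ℝ → ℝ → ℝ} {t₀ t₁ : ℝ}
    (hρ : ContinuousOn (uncurry ρ) (Icc t₀ t₁ ×ˢ univ))
    (hD : ContinuousOn (uncurry D) (Ioo t₀ t₁ ×ˢ univ))
    (hρt : ∀ t ∈ Ioo t₀ t₁, ∀ x, HasDerivAt (fun s => ρ s x) (D t x) t)
    (hGx : ∀ t ∈ Ioo t₀ t₁, ∀ x, HasDerivAt (G t) (D t x) x)
    (hG : ∀ t ∈ Ioo t₀ t₁, G t a = G t b) :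
    ∀ t ∈ Icc t₀ t₁, ∫ x in a..b, ρ t x = ∫ x in a..b, ρ t₀ x := by
  have hderiv : ∀ t ∈ Ioo t₀ t₁, HasDerivAt (fun s => ∫ x in a..b, ρ s x) 0 t := by
    intro t ht
    have hFTC : ∫ x in a..b, D t x = G t b - G t a :=
      intervalIntegral.integral_eq_sub_of_hasDerivAt (fun x _ => hGx t ht x)
        ((hD.comp_continuous (continuous_const.prodMk continuous_id)
          fun x => ⟨ht, mem_univ x⟩).intervalIntegrable a b)
    rw [← sub_eq_zero.2 (hG t ht).symm, ← hFTC]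
    exact hasDerivAt_intervalIntegral_of_continuousOn_s15 isOpen_Ioo ht
      (hρ.mono (prod_mono Ioo_subset_Icc_self subset_rfl)) hD hρt
  intro t ht
  rcases ht.1.eq_or_lt with rfl | hlt
  · rfl
  obtain ⟨c, -, hc⟩ := exists_hasDerivAt_eq_slope _ (fun _ => 0) hlt
    ((continuousOn_intervalIntegral_of_continuousOn_uncurry hρ).mono (Icc_subset_Icc_right ht.2))
    fun s hs => hderiv s ⟨hs.1, hs.2.trans_le ht.2⟩
  exact sub_eq_zero.1 ((div_eq_zero_iff.1 hc.symm).resolve_right (sub_ne_zero.2 hlt.ne'))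

theorem support_subset_Ioc_of_forall_le_abs {φ : ℝ → ℝ} {R : ℝ}
    (hφ : ∀ x, R ≤ |x| → φ x = 0) : support φ ⊆ Ioc (-R) R := fun x hx => by
  by_contra hx'
  refine hx (hφ x ?_)
  rcases not_and_or.1 hx' with h | h
  · exact (le_neg.1 (not_lt.1 h)).trans (neg_le_abs x)
  · exact (not_le.1 h).le.trans (le_abs_self x)

end Conservation

theorem stmt_15_general (f : ℝ → ℝ) (hf : ContDiff ℝ 2 f)
    (T : ℝ) (u v : ℝ → ℝ → ℝ)
    (husmooth : ContDiffOn ℝ 2 (Function.uncurry u) (Icc 0 T ×ˢ univ))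
    (hvsmooth : ContDiffOn ℝ 2 (Function.uncurry v) (Icc 0 T ×ˢ univ))
    (hupos : ∀ t x : ℝ, 0 < u t x) (hvpos : ∀ t x : ℝ, 0 < v t x)
    (hu : ∀ t ∈ Ioo (0:ℝ) T, ∀ x : ℝ,
      pt u t x = px (fun s y => u s y * px (fun a b => f (u a b + v a b)) s y) t x)
    (hv : ∀ t ∈ Ioo (0:ℝ) T, ∀ x : ℝ,
      pt v t x = px (fun s y => v s y * px (fun a b => f (u a b + v a b)) s y) t x)
    (R : ℝ)
    (hdecay : ∀ t ∈ Icc (0:ℝ) T, ∀ x : ℝ, R ≤ |x| → u t x = v t x) :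
    ∀ t ∈ Icc (0:ℝ) T,
      ∫ x, u t x * Real.log (u t x / v t x)
        = ∫ x, u 0 x * Real.log (u 0 x / v 0 x) := by
  have hu0 : ∀ t x, u t x ≠ 0 := fun t x => (hupos t x).ne'
  have hv0 : ∀ t x, v t x ≠ 0 := fun t x => (hvpos t x).ne'
  have hΩ : IsOpen (Ioo 0 T ×ˢ univ : Set (ℝ × ℝ)) := isOpen_Ioo.prod isOpen_univ
  have hU := husmooth.mono (prod_mono_left Ioo_subset_Icc_self)
  have hV := hvsmooth.mono (prod_mono_left Ioo_subset_Icc_self)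
  have hvanish : ∀ t ∈ Icc 0 T, ∀ x, R ≤ |x| → log (u t x / v t x) = 0 := fun t ht x hx => by
    rw [hdecay t ht x hx, div_self (hv0 t x), log_one]
  have hsupp : ∀ t ∈ Icc 0 T, support (fun x => u t x * log (u t x / v t x)) ⊆ Ioc (-R) R :=
    fun t ht => support_subset_Ioc_of_forall_le_abs fun x hx => by rw [hvanish t ht x hx, mul_zero]
  intro t ht
  rw [← intervalIntegral.integral_eq_integral_of_support_subset (hsupp t ht),
    ← intervalIntegral.integral_eq_integral_of_support_subset (hsupp 0 ⟨le_rfl, ht.1.trans ht.2⟩)]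
  refine intervalIntegral_eq_of_conservationLaw
    (continuousOn_uncurry_mul_log_div husmooth.continuousOn hvsmooth.continuousOn hu0 hv0)
    (continuousOn_uncurry_relEntropyRate (hU.of_le one_le_two) (hV.of_le one_le_two) hΩ hu0 hv0)
    (fun s hs x => hasDerivAt_relEntropyDensity
      ((hU.contDiffAt (hΩ.mem_nhds ⟨hs, mem_univ x⟩)).differentiableAt two_ne_zero)
      ((hV.contDiffAt (hΩ.mem_nhds ⟨hs, mem_univ x⟩)).differentiableAt two_ne_zero)
      (hu0 s x) (hv0 s x))
    (fun s hs x => hasDerivAt_relEntropyFlux_of_contDiffOn hf hΩ hU hV ⟨hs, mem_univ x⟩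
      (hu0 s x) (hv0 s x) (hu s hs x) (hv s hs x))
    (fun s hs => ?_) t ht
  simp only [hvanish s (Ioo_subset_Icc_self hs) R (le_abs_self R),
    hvanish s (Ioo_subset_Icc_self hs) (-R) ((le_abs_self R).trans (abs_neg R).ge), mul_zero]

/-- Preservation of the relative entropy for the general system
`∂ₜu = ∂ₓ(u ∂ₓ(f(u+v)))`, `∂ₜv = ∂ₓ(v ∂ₓ(f(u+v)))` on `(0,T) × ℝ`:
for positive solutions agreeing outside a compact set,
`H(u(t)‖v(t)) = ∫ u log(u/v) dx` is constant on `[0,T]`. -/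
theorem stmt_15 (f : ℝ → ℝ) (hf : ContDiff ℝ 2 f)
    (T : ℝ) (hT : 0 < T) (u v : ℝ → ℝ → ℝ)
    (husmooth : ContDiffOn ℝ 2 (Function.uncurry u) (Icc 0 T ×ˢ univ))
    (hvsmooth : ContDiffOn ℝ 2 (Function.uncurry v) (Icc 0 T ×ˢ univ))
    (hupos : ∀ t x : ℝ, 0 < u t x) (hvpos : ∀ t x : ℝ, 0 < v t x)
    (hu : ∀ t ∈ Ioo (0:ℝ) T, ∀ x : ℝ,
      pt u t x = px (fun s y => u s y * px (fun a b => f (u a b + v a b)) s y) t x)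
    (hv : ∀ t ∈ Ioo (0:ℝ) T, ∀ x : ℝ,
      pt v t x = px (fun s y => v s y * px (fun a b => f (u a b + v a b)) s y) t x)
    (R : ℝ) (hR : 0 < R)
    (hdecay : ∀ t ∈ Icc (0:ℝ) T, ∀ x : ℝ, R ≤ |x| → u t x = v t x)
    (hint : ∀ t ∈ Icc (0:ℝ) T,
      Integrable (fun x => u t x * Real.log (u t x / v t x))) :
    ∀ t ∈ Icc (0:ℝ) T,
      ∫ x, u t x * Real.log (u t x / v t x)
        = ∫ x, u 0 x * Real.log (u 0 x / v 0 x) :=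
  stmt_15_general f hf T u v husmooth hvsmooth hupos hvpos hu hv R hdecay
end
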